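/- Let S be a random vector uniformly distributed on the eight points (0,1,0,2), (0,1,2,0), (0,2,1,0), (0,2,0,1), (1,0,0,2), (1,0,2,0), (2,0,1,0), (2,0,0,1) in ℝ^4 (each with probability 1/8). Then S is NRTD: for all disjoint subsets I, J of {1,2,3,4} and all x_J ≤ x_J* componentwise such that both conditioning events have positive probability, [S_I | S_J > x_J] ≥_st [S_I | S_J > x_J*]. -/

import Mathlib

open scoped Classical
open Finset

noncomputable section

/-- Probability of the event `A` on a finite sample space with weights `w`. -/
def Pr {Ω : Type*} [Fintype Ω] (w : Ω → ℝ) (A : Ω → Prop) : ℝ :=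
  ∑ ω : Ω, if A ω then w ω else 0

/-- Expectation of `f` on a finite sample space with weights `w`. -/
def Expec {Ω : Type*} [Fintype Ω] (w : Ω → ℝ) (f : Ω → ℝ) : ℝ :=
  ∑ ω : Ω, w ω * f ω

/-- Conditional expectation of `f` given the event `A` under weights `w`. -/
def CExp {Ω : Type*} [Fintype Ω] (w : Ω → ℝ) (A : Ω → Prop) (f : Ω → ℝ) : ℝ :=
  (∑ ω : Ω, if A ω then w ω * f ω else 0) / Pr w A

/-- `[X_I | A] ≤_st [X_I | B]` : the conditional distribution of the subvector `X_I`
given the event `A` is dominated, in the usual stochastic order, by the conditional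
distribution of `X_I` given `B`; i.e. conditional expectations of every bounded
coordinatewise increasing function compare. -/
def CondSubvecStochLE {Ω : Type*} [Fintype Ω] {n : ℕ} (w : Ω → ℝ)
    (X : Ω → Fin n → ℝ) (I : Finset (Fin n)) (A B : Ω → Prop) : Prop :=
  ∀ φ : ({i : Fin n // i ∈ I} → ℝ) → ℝ, Monotone φ → (∃ C, ∀ v, |φ v| ≤ C) →
    CExp w A (fun ω => φ fun i => X ω i.1) ≤ CExp w B (fun ω => φ fun i => X ω i.1)

/-- Negative regression dependence: `[X_I | X_J = x_J] ≥_st [X_I | X_J = x_J*]`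
whenever `x_J ≤ x_J*` componentwise and both conditioning events have
positive probability. -/
def IsNRD {Ω : Type*} [Fintype Ω] {n : ℕ} (w : Ω → ℝ) (X : Ω → Fin n → ℝ) : Prop :=
  ∀ I J : Finset (Fin n), Disjoint I J → ∀ x y : Fin n → ℝ, (∀ j ∈ J, x j ≤ y j) →
    0 < Pr w (fun ω => ∀ j ∈ J, X ω j = x j) →
    0 < Pr w (fun ω => ∀ j ∈ J, X ω j = y j) →
    CondSubvecStochLE w X I (fun ω => ∀ j ∈ J, X ω j = y j)
      (fun ω => ∀ j ∈ J, X ω j = x j)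

/-- Negative left-tail dependence: `[X_I | X_J ≤ x_J] ≥_st [X_I | X_J ≤ x_J*]`
whenever `x_J ≤ x_J*` componentwise and both conditioning events have
positive probability. -/
def IsNLTD {Ω : Type*} [Fintype Ω] {n : ℕ} (w : Ω → ℝ) (X : Ω → Fin n → ℝ) : Prop :=
  ∀ I J : Finset (Fin n), Disjoint I J → ∀ x y : Fin n → ℝ, (∀ j ∈ J, x j ≤ y j) →
    0 < Pr w (fun ω => ∀ j ∈ J, X ω j ≤ x j) →
    0 < Pr w (fun ω => ∀ j ∈ J, X ω j ≤ y j) →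
    CondSubvecStochLE w X I (fun ω => ∀ j ∈ J, X ω j ≤ y j)
      (fun ω => ∀ j ∈ J, X ω j ≤ x j)

/-- Negative right-tail dependence: `[X_I | X_J > x_J] ≥_st [X_I | X_J > x_J*]`
whenever `x_J ≤ x_J*` componentwise and both conditioning events have
positive probability. -/
def IsNRTD {Ω : Type*} [Fintype Ω] {n : ℕ} (w : Ω → ℝ) (X : Ω → Fin n → ℝ) : Prop :=
  ∀ I J : Finset (Fin n), Disjoint I J → ∀ x y : Fin n → ℝ, (∀ j ∈ J, x j ≤ y j) →
    0 < Pr w (fun ω => ∀ j ∈ J, x j < X ω j) →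
    0 < Pr w (fun ω => ∀ j ∈ J, y j < X ω j) →
    CondSubvecStochLE w X I (fun ω => ∀ j ∈ J, y j < X ω j)
      (fun ω => ∀ j ∈ J, x j < X ω j)

/-- Negative association on a finite weighted sample space:
`Cov(ψ₁(X_{A₁}), ψ₂(X_{A₂})) ≤ 0` for disjoint `A₁, A₂` and bounded
coordinatewise increasing `ψ₁, ψ₂`. -/
def IsNAfin {Ω : Type*} [Fintype Ω] {n : ℕ} (w : Ω → ℝ) (X : Ω → Fin n → ℝ) : Prop :=
  ∀ A₁ A₂ : Finset (Fin n), Disjoint A₁ A₂ →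
    ∀ ψ₁ : ({i : Fin n // i ∈ A₁} → ℝ) → ℝ, ∀ ψ₂ : ({i : Fin n // i ∈ A₂} → ℝ) → ℝ,
      Monotone ψ₁ → Monotone ψ₂ → (∃ C, ∀ v, |ψ₁ v| ≤ C) → (∃ C, ∀ v, |ψ₂ v| ≤ C) →
      Expec w (fun ω => (ψ₁ fun i => X ω i.1) * (ψ₂ fun i => X ω i.1))
        ≤ Expec w (fun ω => ψ₁ fun i => X ω i.1) * Expec w (fun ω => ψ₂ fun i => X ω i.1)

/-- The uniform distribution on the permutations of `Fin n`. -/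
def unifPerm (n : ℕ) : Equiv.Perm (Fin n) → ℝ := fun _ => (Nat.factorial n : ℝ)⁻¹

/-- The random vector with the permutation distribution on `a`:
`X = (a_{σ(1)}, …, a_{σ(n)})` for a uniformly random permutation `σ`. -/
def permVec {n : ℕ} (a : Fin n → ℝ) (σ : Equiv.Perm (Fin n)) : Fin n → ℝ :=
  fun i => a (σ i)

/-- The score vector uniformly distributed on the eight points
`(0,1,0,2), (0,1,2,0), (0,2,1,0), (0,2,0,1), (1,0,0,2), (1,0,2,0), (2,0,1,0),
(2,0,0,1)`. -/
def ko8Score : Fin 8 → Fin 4 → ℝ :=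
  ![![0, 1, 0, 2], ![0, 1, 2, 0], ![0, 2, 1, 0], ![0, 2, 0, 1],
    ![1, 0, 0, 2], ![1, 0, 2, 0], ![2, 0, 1, 0], ![2, 0, 0, 1]]

def ko8Unif : Fin 8 → ℝ := fun _ => (8 : ℝ)⁻¹

/-!
View an outcome as the results of the three matches. Each event `{S_J > x_J}` is a threshold
event `{S ≥ q}` with levels `q ∈ {0,…,3}⁴`, and `x ≤ x*` gives levels `p ≤ q`. Couple the
uniform law on `{S ≥ q}` with the uniform law on `{S ≥ p}` by redrawing only the matches that
involve a player constrained by `q` (the final counts as one as soon as some `q_j ≥ 2`) and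
keeping the others. Every match of a player outside `J` is either kept or, on `{S ≥ q}`, lost
to a constrained player, so along the coupling their score can only go up; hence so does the
conditional expectation of every increasing function of `S_I`.
-/

section FiniteWeights

variable {Ω : Type*} [Fintype Ω]

theorem CExp_eq_sum_mul (w : Ω → ℝ) (A : Ω → Prop) (f : Ω → ℝ) :
    CExp w A f = ∑ ω, (if A ω then w ω / Pr w A else 0) * f ω := by
  rw [CExp, Finset.sum_div]
  refine Finset.sum_congr rfl fun ω _ => ?_
  split_ifs <;> ring

theorem CExp_le_CExp_of_coupling (w : Ω → ℝ) (A B : Ω → Prop) (g : Ω → ℝ)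
    (K : Ω → Ω → ℝ) (hK : ∀ ω ω', 0 ≤ K ω ω')
    (hA : ∀ ω, ∑ ω', K ω ω' = if A ω then w ω / Pr w A else 0)
    (hB : ∀ ω', ∑ ω, K ω ω' = if B ω' then w ω' / Pr w B else 0)
    (hg : ∀ ω ω', K ω ω' ≠ 0 → g ω ≤ g ω') :
    CExp w A g ≤ CExp w B g := by
  have hKg : ∀ ω ω', K ω ω' * g ω ≤ K ω ω' * g ω' := fun ω ω' => by
    rcases eq_or_ne (K ω ω') 0 with h | h
    · simp [h]
    · exact mul_le_mul_of_nonneg_left (hg ω ω' h) (hK ω ω')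
  calc CExp w A g = ∑ ω, ∑ ω', K ω ω' * g ω := by
        simp only [CExp_eq_sum_mul, ← hA, Finset.sum_mul]
    _ ≤ ∑ ω, ∑ ω', K ω ω' * g ω' :=
        Finset.sum_le_sum fun ω _ => Finset.sum_le_sum fun ω' _ => hKg ω ω'
    _ = CExp w B g := by
        rw [Finset.sum_comm]
        simp only [CExp_eq_sum_mul, ← hB, Finset.sum_mul]

theorem Pr_const (c : ℝ) (A : Ω → Prop) [DecidablePred A] :
    Pr (fun _ => c) A = #{ω | A ω} * c := by
  simp [Pr, Finset.sum_ite]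

theorem exists_of_Pr_pos {w : Ω → ℝ} {A : Ω → Prop} (h : 0 < Pr w A) : ∃ ω, A ω := by
  by_contra! hA
  simp [Pr, hA] at h

end FiniteWeights

-- Players are indexed from `0`: the semifinals are `0` vs `1` and `2` vs `3`.

def firstSemiWinner : Fin 8 → Fin 4 := ![1, 1, 1, 1, 0, 0, 0, 0]

def secondSemiWinner : Fin 8 → Fin 4 := ![3, 2, 2, 3, 3, 2, 2, 3]

def champion : Fin 8 → Fin 4 := ![3, 2, 1, 1, 3, 2, 0, 0]

def tournamentScore (ω : Fin 8) (j : Fin 4) : ℕ :=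
  (if j = firstSemiWinner ω ∨ j = secondSemiWinner ω then 1 else 0) +
    if j = champion ω then 1 else 0

theorem ko8Score_eq_tournamentScore (ω : Fin 8) (j : Fin 4) :
    ko8Score ω j = tournamentScore ω j := by
  fin_cases ω <;> fin_cases j <;>
    norm_num [ko8Score, tournamentScore, firstSemiWinner, secondSemiWinner, champion, Fin.ext_iff]

theorem tournamentScore_le_two (ω : Fin 8) (j : Fin 4) : tournamentScore ω j ≤ 2 := by
  revert ω j; decide

abbrev ScoresAtLeast (q : Fin 4 → Fin 4) (ω : Fin 8) : Prop :=
  ∀ j, (q j : ℕ) ≤ tournamentScore ω j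

/-- The final enters only through the half of the draw the champion comes from. -/
abbrev AgreeOnFreeMatches (q : Fin 4 → Fin 4) (ω ω' : Fin 8) : Prop :=
  (q 0 = 0 ∧ q 1 = 0 → firstSemiWinner ω = firstSemiWinner ω') ∧
    (q 2 = 0 ∧ q 3 = 0 → secondSemiWinner ω = secondSemiWinner ω') ∧
    ((∀ j, q j ≤ 1) → (champion ω < 2 ↔ champion ω' < 2))

abbrev Coupled (p q : Fin 4 → Fin 4) (ω ω' : Fin 8) : Prop :=
  ScoresAtLeast q ω ∧ ScoresAtLeast p ω' ∧ AgreeOnFreeMatches q ω ω'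

theorem score_le_of_agreeOnFreeMatches : ∀ q ω ω', ScoresAtLeast q ω →
    AgreeOnFreeMatches q ω ω' → ∀ j, q j = 0 → tournamentScore ω j ≤ tournamentScore ω' j := by
  decide +kernel

/- A nonempty `ScoresAtLeast q` fixes exactly the results that `AgreeOnFreeMatches q` leaves
free, and `ScoresAtLeast p` with `p ≤ q` constrains only those; so every `ω'` has exactly one
partner and all `ω` have equally many. -/
theorem card_coupled_left : ∀ q, (∃ ω, ScoresAtLeast q ω) → ∀ p, (∀ j, p j ≤ q j) →
    ∀ ω, #{ω' | Coupled p q ω ω'} * #{ω | ScoresAtLeast q ω} =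
      if ScoresAtLeast q ω then #{ω' | ScoresAtLeast p ω'} else 0 := by
  decide +kernel

theorem card_coupled_right : ∀ q, (∃ ω, ScoresAtLeast q ω) → ∀ p, (∀ j, p j ≤ q j) →
    ∀ ω', #{ω | Coupled p q ω ω'} = if ScoresAtLeast p ω' then 1 else 0 := by
  decide +kernel

def couplingKernel (p q : Fin 4 → Fin 4) (ω ω' : Fin 8) : ℝ :=
  if Coupled p q ω ω' then (#{ω | ScoresAtLeast p ω} : ℝ)⁻¹ else 0

theorem sum_couplingKernel_left {p q : Fin 4 → Fin 4} (hpq : ∀ j, p j ≤ q j)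
    (hq : ∃ ω, ScoresAtLeast q ω) (ω : Fin 8) :
    ∑ ω', couplingKernel p q ω ω' =
      if ScoresAtLeast q ω then ko8Unif ω / Pr ko8Unif (ScoresAtLeast q) else 0 := by
  obtain ⟨ω₀, hω₀⟩ := hq
  have hA : #{ω | ScoresAtLeast q ω} ≠ 0 := Finset.card_ne_zero.mpr ⟨ω₀, by simpa using hω₀⟩
  have hB : #{ω | ScoresAtLeast p ω} ≠ 0 := Finset.card_ne_zero.mpr
    ⟨ω₀, by simpa using fun j => (Fin.le_def.mp (hpq j)).trans (hω₀ j)⟩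
  have h := card_coupled_left q ⟨ω₀, hω₀⟩ p hpq ω
  unfold ko8Unif
  simp only [couplingKernel, ← Finset.sum_filter, Finset.sum_const, nsmul_eq_mul, Pr_const]
  split_ifs at h ⊢
  · have hC : (#{ω' | Coupled p q ω ω'} : ℝ) ≠ 0 := by exact_mod_cast left_ne_zero_of_mul (h ▸ hB)
    rw [← h]
    push_cast
    field_simp
  · simp [(mul_eq_zero.mp h).resolve_right hA]

theorem sum_couplingKernel_right {p q : Fin 4 → Fin 4} (hpq : ∀ j, p j ≤ q j)
    (hq : ∃ ω, ScoresAtLeast q ω) (ω' : Fin 8) :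
    ∑ ω, couplingKernel p q ω ω' =
      if ScoresAtLeast p ω' then ko8Unif ω' / Pr ko8Unif (ScoresAtLeast p) else 0 := by
  unfold ko8Unif
  simp only [couplingKernel, ← Finset.sum_filter, Finset.sum_const, nsmul_eq_mul, Pr_const,
    card_coupled_right q hq p hpq ω']
  split_ifs with hω'
  · have hB : (#{ω | ScoresAtLeast p ω} : ℝ) ≠ 0 := by
      exact_mod_cast Finset.card_ne_zero.mpr ⟨ω', by simpa using hω'⟩
    push_cast
    field_simp
  · simp

theorem CExp_scoresAtLeast_le {p q : Fin 4 → Fin 4} (hpq : ∀ j, p j ≤ q j)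
    (hq : ∃ ω, ScoresAtLeast q ω) (g : Fin 8 → ℝ)
    (hg : ∀ ω ω', ScoresAtLeast q ω → AgreeOnFreeMatches q ω ω' → g ω ≤ g ω') :
    CExp ko8Unif (ScoresAtLeast q) g ≤ CExp ko8Unif (ScoresAtLeast p) g := by
  refine CExp_le_CExp_of_coupling _ _ _ g (couplingKernel p q)
    (fun _ _ => by unfold couplingKernel; positivity)
    (fun ω => by convert sum_couplingKernel_left hpq hq ω)
    (fun ω' => by convert sum_couplingKernel_right hpq hq ω') fun ω ω' hK => ?_
  obtain ⟨hω, -, hagree⟩ : Coupled p q ω ω' := by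
    by_contra hC
    exact hK (if_neg hC)
  exact hg ω ω' hω hagree

def level (t : ℝ) : Fin 4 :=
  if t < 0 then 0 else if t < 1 then 1 else if t < 2 then 2 else 3

theorem lt_natCast_iff_level_le {t : ℝ} {n : ℕ} (hn : n ≤ 2) : t < n ↔ (level t : ℕ) ≤ n := by
  unfold level
  interval_cases n <;> split_ifs <;> norm_num <;> linarith

theorem level_mono {s t : ℝ} (h : s ≤ t) : level s ≤ level t := by
  unfold level
  split_ifs <;> first | decide | (exfalso; linarith)

def tailLevel (J : Finset (Fin 4)) (x : Fin 4 → ℝ) (j : Fin 4) : Fin 4 :=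
  if j ∈ J then level (x j) else 0

theorem rightTail_eq_scoresAtLeast (J : Finset (Fin 4)) (x : Fin 4 → ℝ) :
    (fun ω => ∀ j ∈ J, x j < ko8Score ω j) = ScoresAtLeast (tailLevel J x) := by
  ext ω
  refine forall_congr' fun j => ?_
  by_cases hj : j ∈ J
  · simp only [tailLevel, hj, if_true, true_implies, ko8Score_eq_tournamentScore]
    exact lt_natCast_iff_level_le (tournamentScore_le_two ω j)
  · simp [tailLevel, hj]

/-- the random vector `S` uniform on the eight points above (scores of
a 4-player knockout tournament with deterministic draw and equal strength) is NRTD: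
`[S_I | S_J > x_J] ≥_st [S_I | S_J > x_J*]` for all disjoint `I, J ⊆ {1,2,3,4}` and
all `x_J ≤ x_J*` componentwise with positive-probability conditioning events. -/
theorem knockout4_equal_strength_NRTD : IsNRTD ko8Unif ko8Score := by
  intro I J hIJ x y hxy _ hy φ hφ _
  simp only [rightTail_eq_scoresAtLeast] at hy ⊢
  refine CExp_scoresAtLeast_le (fun j => ?_) (exists_of_Pr_pos hy) _
    fun ω ω' hω hagree => hφ fun i => ?_
  · unfold tailLevel
    split_ifs with hj
    exacts [level_mono (hxy j hj), le_rfl]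
  · have hi : tailLevel J y i = 0 := if_neg (Finset.disjoint_left.mp hIJ i.2)
    simp only [ko8Score_eq_tournamentScore]
    exact_mod_cast score_le_of_agreeOnFreeMatches _ ω ω' hω hagree i hi
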